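/- Let L = H^{⊕11} be the rank-22 even unimodular lattice modeling H^2(K3,Z). Let N = ad = ap·d̃, let b' be an integer with b'·b̃ ≡ -1 mod d̃, and ζ_M = exp(2πi/M). Then Σ_{u ∈ L/NL} ζ_N^{u·v} · δ_{ad̃ u, 0} · ζ_{ad̃}^{-(ab'/2)(u/p)²} = δ_{dv,0} · ζ_{ad̃}^{-(ab̃/2)(v/p)²} · (a²d̃)^{11}, where δ_{w,0} is 1 if w = 0 in L/NL and 0 otherwise, and (u/p)² denotes the quadratic form evaluated on the element ũ with u = p·ũ. -/

import Mathlib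

open Complex Finset

/-- The hyperbolic bilinear form on `H^{⊕n}`, `H` having Gram matrix `[[0,1],[1,0]]`. -/
def hypB (n : ℕ) (x y : Fin (2 * n) → ℤ) : ℤ :=
  ∑ i : Fin n,
    (x ⟨2 * i.val, by have := i.isLt; omega⟩ * y ⟨2 * i.val + 1, by have := i.isLt; omega⟩ +
     x ⟨2 * i.val + 1, by have := i.isLt; omega⟩ * y ⟨2 * i.val, by have := i.isLt; omega⟩)

/-- Integer lift of an element of `L/NL`. -/
def zlift {N : ℕ} (v : Fin (2 * 11) → ZMod N) : Fin (2 * 11) → ℤ := fun i => ((v i).val : ℤ)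

/-- Integer lift of `v/a` for `v ∈ L/NL` with `v = a·ṽ` (componentwise integer division
of the canonical lift by `a`). -/
def zdiv {N : ℕ} (v : Fin (2 * 11) → ZMod N) (a : ℕ) : Fin (2 * 11) → ℤ :=
  fun i => ((v i).val : ℤ) / (a : ℤ)

/-- `eZ M x = exp(2πi x / M) = ζ_M^x`. -/
noncomputable def eZ (M : ℕ) (x : ℤ) : ℂ :=
  Complex.exp (2 * (Real.pi : ℂ) * Complex.I * (x : ℂ) / (M : ℂ))

/-! ### Auxiliary lemmas about `eZ` -/

lemma eZ_add (M : ℕ) (x y : ℤ) : eZ M (x + y) = eZ M x * eZ M y := by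
  simp only [eZ, ← Complex.exp_add]
  congr 1
  push_cast
  ring

lemma eZ_zero (M : ℕ) : eZ M 0 = 1 := by simp [eZ]

lemma eZ_add_int_mul (M : ℕ) (x k : ℤ) (hM : M ≠ 0) : eZ M (x + M * k) = eZ M x := by
  rw [eZ_add]
  have hMc : (M : ℂ) ≠ 0 := by exact_mod_cast hM
  have h1 : 2 * (Real.pi : ℂ) * Complex.I * (((M : ℤ) * k : ℤ) : ℂ) / (M : ℂ)
      = (k : ℤ) * (2 * Real.pi * Complex.I) := by push_cast; field_simp
  have : eZ M ((M : ℤ) * k) = 1 := by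
    rw [eZ, h1]; exact Complex.exp_int_mul_two_pi_mul_I k
  rw [this, mul_one]

lemma eZ_congr (M : ℕ) (hM : M ≠ 0) {x y : ℤ} (h : (M : ℤ) ∣ (x - y)) : eZ M x = eZ M y := by
  obtain ⟨k, hk⟩ := h
  have : x = y + M * k := by linarith
  rw [this, eZ_add_int_mul M y k hM]

lemma eZ_p_mul (p M : ℕ) (hp : p ≠ 0) (x : ℤ) : eZ (p * M) (p * x) = eZ M x := by
  by_cases hM : M = 0
  · simp [hM, eZ]
  have hpc : (p : ℂ) ≠ 0 := by exact_mod_cast hp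
  have hMc : (M : ℂ) ≠ 0 := by exact_mod_cast hM
  simp only [eZ]
  congr 1
  push_cast
  field_simp

lemma eZ_nat_mul (M : ℕ) (c : ℤ) (n : ℕ) : eZ M (c * n) = (eZ M c) ^ n := by
  induction n with
  | zero => simpa using eZ_zero M
  | succ k ih =>
      have : c * ((k : ℤ) + 1) = c * k + c := by ring
      rw [show ((k + 1 : ℕ) : ℤ) = (k : ℤ) + 1 by norm_cast, this, eZ_add, ih, pow_succ]

lemma eZ_eq_one_iff (M : ℕ) (hM : M ≠ 0) (c : ℤ) : eZ M c = 1 ↔ (M : ℤ) ∣ c := by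
  constructor
  · intro h
    rw [eZ, Complex.exp_eq_one_iff] at h
    obtain ⟨n, hn⟩ := h
    have hMc : (M : ℂ) ≠ 0 := by exact_mod_cast hM
    have hpi : (2 : ℂ) * Real.pi * Complex.I ≠ 0 := by
      simp [Real.pi_ne_zero, Complex.I_ne_zero]
    have : (c : ℂ) = (n : ℂ) * (M : ℂ) := by
      refine mul_left_cancel₀ hpi ?_
      field_simp at hn
      linear_combination (2 * (Real.pi : ℂ) * Complex.I) * hn
    have : c = n * M := by exact_mod_cast this
    exact ⟨n, by linarith⟩
  · intro ⟨k, hk⟩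
    have : c = 0 + (M : ℤ) * k := by linarith
    rw [this, eZ_add_int_mul M 0 k hM, eZ_zero]

lemma sum_range_eZ (M : ℕ) (hM : M ≠ 0) (c : ℤ) :
    ∑ j ∈ Finset.range M, eZ M (c * j) = if (M : ℤ) ∣ c then (M : ℂ) else 0 := by
  have hz : ∀ j : ℕ, eZ M (c * j) = (eZ M c) ^ j := fun j => eZ_nat_mul M c j
  simp only [hz]
  by_cases h : (M : ℤ) ∣ c
  · rw [if_pos h]
    have h1 : eZ M c = 1 := (eZ_eq_one_iff M hM c).2 h
    simp [h1]
  · rw [if_neg h]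
    have h1 : eZ M c ≠ 1 := fun hc => h ((eZ_eq_one_iff M hM c).1 hc)
    rw [geom_sum_eq h1]
    have hzM : (eZ M c) ^ M = 1 := by
      rw [← eZ_nat_mul]
      have : c * (M : ℕ) = 0 + (M : ℤ) * c := by ring
      rw [this, eZ_add_int_mul M 0 c hM, eZ_zero]
    simp [hzM]

lemma eZ_sum (M : ℕ) {ι : Type*} (s : Finset ι) (f : ι → ℤ) :
    eZ M (∑ i ∈ s, f i) = ∏ i ∈ s, eZ M (f i) := by
  induction s using Finset.cons_induction with
  | empty => simpa using eZ_zero M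
  | cons a s ha ih => rw [Finset.sum_cons, Finset.prod_cons, eZ_add, ih]

/-! ### Sum reindexing lemmas -/

lemma sum_zmod_eq_sum_range (M : ℕ) [NeZero M] (f : ℕ → ℂ) :
    ∑ x : ZMod M, f x.val = ∑ n ∈ Finset.range M, f n := by
  refine Finset.sum_nbij' (fun x => x.val) (fun n => (n : ZMod M)) ?_ ?_ ?_ ?_ ?_
  · intro x _; exact Finset.mem_range.2 (ZMod.val_lt x)
  · intro n _; exact Finset.mem_univ _
  · intro x _; simp [ZMod.natCast_val, ZMod.cast_id]
  · intro n hn; exact ZMod.val_cast_of_lt (Finset.mem_range.1 hn)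
  · intro x _; rfl

lemma sum_range_mul_split (A B : ℕ) (f : ℕ → ℂ) :
    ∑ n ∈ Finset.range (A * B), f n
      = ∑ j ∈ Finset.range A, ∑ i ∈ Finset.range B, f (j * B + i) := by
  by_cases hB : B = 0
  · simp [hB]
  rw [← Finset.sum_product']
  refine Finset.sum_nbij' (fun n => (n / B, n % B)) (fun p => p.1 * B + p.2) ?_ ?_ ?_ ?_ ?_
  · intro n hn
    have hn' := Finset.mem_range.1 hn
    refine Finset.mem_product.2 ⟨Finset.mem_range.2 ?_,
      Finset.mem_range.2 (Nat.mod_lt _ (Nat.pos_of_ne_zero hB))⟩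
    exact Nat.div_lt_of_lt_mul (by rwa [mul_comm] at hn')
  · intro p hp
    have h1 := Finset.mem_range.1 (Finset.mem_product.1 hp).1
    have h2 := Finset.mem_range.1 (Finset.mem_product.1 hp).2
    refine Finset.mem_range.2 ?_
    calc p.1 * B + p.2 < p.1 * B + B := by omega
    _ = (p.1 + 1) * B := by ring
    _ ≤ A * B := Nat.mul_le_mul_right B (by omega)
  · intro n _
    exact Nat.div_add_mod' n B
  · intro p hp
    have h2 := Finset.mem_range.1 (Finset.mem_product.1 hp).2
    have e1 : (p.1 * B + p.2) / B = p.1 := by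
      rw [mul_comm, Nat.mul_add_div (Nat.pos_of_ne_zero hB), Nat.div_eq_of_lt h2, Nat.add_zero]
    have e2 : (p.1 * B + p.2) % B = p.2 := by
      rw [mul_comm, Nat.mul_add_mod]
      exact Nat.mod_eq_of_lt h2
    rw [e1, e2]
  · intro n _
    simp only []
    congr 1
    exact (Nat.div_add_mod' n B).symm

/-! ### Lemmas about `hypB` -/

lemma hypB_mul_left (n : ℕ) (c : ℤ) (x y : Fin (2 * n) → ℤ) :
    hypB n (fun i => c * x i) y = c * hypB n x y := by
  simp only [hypB, Finset.mul_sum]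
  exact Finset.sum_congr rfl fun i _ => by ring

lemma hypB_self (n : ℕ) (x : Fin (2 * n) → ℤ) :
    hypB n x x = 2 * ∑ i : Fin n,
      x ⟨2 * i.val, by have := i.isLt; omega⟩ * x ⟨2 * i.val + 1, by have := i.isLt; omega⟩ := by
  simp only [hypB, Finset.mul_sum]
  exact Finset.sum_congr rfl fun i _ => by ring

lemma hypB_self_div_two (n : ℕ) (x : Fin (2 * n) → ℤ) :
    hypB n x x / 2 = ∑ i : Fin n,
      x ⟨2 * i.val, by have := i.isLt; omega⟩ * x ⟨2 * i.val + 1, by have := i.isLt; omega⟩ := by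
  rw [hypB_self]; exact Int.mul_ediv_cancel_left _ (by norm_num)

/-! ### Pairing equivalence -/

def pairEquiv (n : ℕ) (β : Type*) : (Fin n → β × β) ≃ (Fin (2 * n) → β) where
  toFun g j := if h : j.val % 2 = 0 then (g ⟨j.val / 2, by have := j.isLt; omega⟩).1
    else (g ⟨j.val / 2, by have := j.isLt; omega⟩).2
  invFun f i := (f ⟨2 * i.val, by have := i.isLt; omega⟩,
    f ⟨2 * i.val + 1, by have := i.isLt; omega⟩)
  left_inv g := by
    funext i
    have h1 : (2 * i.val) % 2 = 0 := by omega
    have h2 : (2 * i.val + 1) % 2 = 1 := by omega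
    have h3 : (2 * i.val) / 2 = i.val := by omega
    have h4 : (2 * i.val + 1) / 2 = i.val := by omega
    ext <;> simp [h1, h2, h3, h4]
  right_inv f := by
    funext j
    by_cases h : j.val % 2 = 0
    · simp only [dif_pos h]; congr 1; ext; simp only []; omega
    · simp only [dif_neg h]; congr 1; ext; simp only []; omega

lemma pairEquiv_fst (n : ℕ) {β : Type*} (g : Fin n → β × β) (i : Fin n) (h : 2 * i.val < 2 * n) :
    pairEquiv n β g ⟨2 * i.val, h⟩ = (g i).1 := by
  simp only [pairEquiv, Equiv.coe_fn_mk]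
  have h1 : (2 * i.val) % 2 = 0 := by omega
  have h3 : (2 * i.val) / 2 = i.val := by omega
  simp [h1, h3]

lemma pairEquiv_snd (n : ℕ) {β : Type*} (g : Fin n → β × β) (i : Fin n)
    (h : 2 * i.val + 1 < 2 * n) :
    pairEquiv n β g ⟨2 * i.val + 1, h⟩ = (g i).2 := by
  simp only [pairEquiv, Equiv.coe_fn_mk]
  have h1 : (2 * i.val + 1) % 2 = 1 := by omega
  have h4 : (2 * i.val + 1) / 2 = i.val := by omega
  simp [h1, h4]

lemma fin_pair_forall (n : ℕ) (P : Fin (2 * n) → Prop) :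
    (∀ j, P j) ↔ ∀ i : Fin n,
      P ⟨2 * i.val, by have := i.isLt; omega⟩ ∧ P ⟨2 * i.val + 1, by have := i.isLt; omega⟩ := by
  constructor
  · intro H i; exact ⟨H _, H _⟩
  · intro H j
    by_cases h : j.val % 2 = 0
    · have h1 := (H ⟨j.val / 2, by have := j.isLt; omega⟩).1
      have he : (⟨2 * (j.val / 2), by have := j.isLt; omega⟩ : Fin (2 * n)) = j := by
        ext; simp only []; omega
      rwa [he] at h1
    · have h1 := (H ⟨j.val / 2, by have := j.isLt; omega⟩).2
      have he : (⟨2 * (j.val / 2) + 1, by have := j.isLt; omega⟩ : Fin (2 * n)) = j := by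
        ext; simp only []; omega
      rwa [he] at h1

/-! ### The key two-dimensional Gauss sum -/

lemma pair_sum (a dt M : ℕ) (ha : 0 < a) (hdt : 0 < dt) (b' bt : ℤ)
    (hbb : (dt : ℤ) ∣ (b' * bt + 1)) [NeZero M] (hMdef : M = a * dt) (A B : ℕ) :
    ∑ x : ZMod M, ∑ y : ZMod M,
      eZ M ((x.val : ℤ) * B + (y.val : ℤ) * A - (a : ℤ) * b' * x.val * y.val)
    = if a ∣ A ∧ a ∣ B then
        ((a ^ 2 * dt : ℕ) : ℂ) * eZ M (-((a : ℤ) * bt * ((A : ℤ) / a) * ((B : ℤ) / a)))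
      else 0 := by
  have hM : M ≠ 0 := NeZero.ne M
  have hMZ : (M : ℤ) = (a : ℤ) * (dt : ℤ) := by rw [hMdef]; push_cast; ring
  -- Step 1: inner y-sum
  have key : ∀ x : ZMod M,
      (∑ y : ZMod M, eZ M ((x.val : ℤ) * B + (y.val : ℤ) * A - (a : ℤ) * b' * x.val * y.val))
      = eZ M ((x.val : ℤ) * B) *
          (if (M : ℤ) ∣ ((A : ℤ) - (a : ℤ) * b' * x.val) then (M : ℂ) else 0) := by
    intro x
    have e1 : ∀ y : ZMod M,
        eZ M ((x.val : ℤ) * B + (y.val : ℤ) * A - (a : ℤ) * b' * x.val * y.val)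
        = eZ M ((x.val : ℤ) * B) * eZ M (((A : ℤ) - (a : ℤ) * b' * x.val) * y.val) := by
      intro y
      rw [← eZ_add]
      congr 1
      ring
    rw [Finset.sum_congr rfl fun y _ => e1 y, ← Finset.mul_sum]
    congr 1
    rw [show (∑ y : ZMod M, eZ M (((A : ℤ) - (a : ℤ) * b' * x.val) * y.val))
        = ∑ n ∈ Finset.range M, eZ M (((A : ℤ) - (a : ℤ) * b' * x.val) * n) from
      sum_zmod_eq_sum_range M (fun n => eZ M (((A : ℤ) - (a : ℤ) * b' * x.val) * n))]
    exact sum_range_eZ M hM _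
  rw [Finset.sum_congr rfl fun x _ => key x]
  by_cases hA : a ∣ A
  · obtain ⟨w, hw⟩ := hA
    have cond : ∀ x : ZMod M, ((M : ℤ) ∣ ((A : ℤ) - (a : ℤ) * b' * x.val))
        ↔ ((dt : ℤ) ∣ ((x.val : ℤ) + bt * w)) := by
      intro x
      constructor
      · rintro ⟨k, hk⟩
        obtain ⟨m, hm⟩ := hbb
        have h1 : (w : ℤ) - b' * x.val = dt * k := by
          have : (a : ℤ) * ((w : ℤ) - b' * x.val) = (a : ℤ) * (dt * k) := by
            rw [hMZ] at hk
            push_cast [hw] at hk ⊢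
            linear_combination hk
          exact mul_left_cancel₀ (by exact_mod_cast ha.ne' : (a : ℤ) ≠ 0) this
        exact ⟨bt * k + (x.val : ℤ) * m, by linear_combination bt * h1 + (x.val : ℤ) * hm⟩
      · rintro ⟨k, hk⟩
        obtain ⟨m, hm⟩ := hbb
        refine ⟨-b' * k + w * m, ?_⟩
        have h1 : (w : ℤ) - b' * (x.val : ℤ) = dt * (-b' * k + w * m) := by
          linear_combination (-b') * hk + (w : ℤ) * hm
        rw [hMZ]
        push_cast [hw]
        linear_combination (a : ℤ) * h1
    rw [Finset.sum_congr rfl fun x _ => by rw [if_congr (cond x) rfl rfl]]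
    rw [show (∑ x : ZMod M, eZ M ((x.val : ℤ) * B) *
          (if (dt : ℤ) ∣ ((x.val : ℤ) + bt * w) then (M : ℂ) else 0))
        = ∑ n ∈ Finset.range M, eZ M ((n : ℤ) * B) *
          (if (dt : ℤ) ∣ ((n : ℤ) + bt * w) then (M : ℂ) else 0) from
      sum_zmod_eq_sum_range M
        (fun n => eZ M ((n : ℤ) * B) * (if (dt : ℤ) ∣ ((n : ℤ) + bt * w) then (M : ℂ) else 0))]
    rw [show Finset.range M = Finset.range (a * dt) from by rw [hMdef],
      sum_range_mul_split a dt]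
    set i0 : ℕ := ((-bt * w) % dt).toNat with hi0def
    have hi0lt : i0 < dt := by
      have h1 : (-bt * w) % dt < dt := Int.emod_lt_of_pos _ (by exact_mod_cast hdt)
      have h2 : 0 ≤ (-bt * w) % dt := Int.emod_nonneg _ (by exact_mod_cast hdt.ne')
      omega
    have hi0dvd : (dt : ℤ) ∣ ((i0 : ℤ) + bt * w) := by
      have h2 : 0 ≤ (-bt * w) % dt := Int.emod_nonneg _ (by exact_mod_cast hdt.ne')
      have h3 : (i0 : ℤ) = (-bt * w) % dt := Int.toNat_of_nonneg h2
      have h4 := Int.emod_add_mul_ediv (-bt * w) dt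
      exact ⟨-((-bt * w) / dt), by linarith⟩
    have inner : ∀ j ∈ Finset.range a, (∑ i ∈ Finset.range dt,
        eZ M (((j * dt + i : ℕ) : ℤ) * B) *
          (if (dt : ℤ) ∣ (((j * dt + i : ℕ) : ℤ) + bt * w) then (M : ℂ) else 0))
        = eZ M (((j * dt + i0 : ℕ) : ℤ) * B) * M := by
      intro j _
      have step : ∀ i ∈ Finset.range dt,
          (eZ M (((j * dt + i : ℕ) : ℤ) * B) *
            (if (dt : ℤ) ∣ (((j * dt + i : ℕ) : ℤ) + bt * w) then (M : ℂ) else 0))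
          = if i = i0 then eZ M (((j * dt + i : ℕ) : ℤ) * B) * M else 0 := by
        intro i hi
        have hilt := Finset.mem_range.1 hi
        have hcond : ((dt : ℤ) ∣ (((j * dt + i : ℕ) : ℤ) + bt * w)) ↔ i = i0 := by
          constructor
          · intro h
            have h5 : (dt : ℤ) ∣ ((i : ℤ) + bt * w) := by
              obtain ⟨k, hk⟩ := h
              exact ⟨k - j, by push_cast at hk ⊢; linarith⟩
            have h6 : (dt : ℤ) ∣ ((i : ℤ) - (i0 : ℤ)) := by
              obtain ⟨k1, hk1⟩ := h5
              obtain ⟨k2, hk2⟩ := hi0dvd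
              exact ⟨k1 - k2, by linarith⟩
            have h7 : ((i : ℤ) - (i0 : ℤ)) = 0 := by
              refine Int.eq_zero_of_dvd_of_natAbs_lt_natAbs h6 ?_
              simp only [Int.natAbs_natCast]
              omega
            omega
          · intro h
            subst h
            obtain ⟨k, hk⟩ := hi0dvd
            exact ⟨j + k, by push_cast; linarith⟩
        rw [if_congr hcond rfl rfl]
        by_cases h : i = i0
        · rw [if_pos h, if_pos h]
        · rw [if_neg h, if_neg h, mul_zero]
      rw [Finset.sum_congr rfl step, Finset.sum_ite_eq' (Finset.range dt) i0]
      rw [if_pos (Finset.mem_range.2 hi0lt)]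
    rw [Finset.sum_congr rfl inner]
    have split2 : ∀ j ∈ Finset.range a, (eZ M (((j * dt + i0 : ℕ) : ℤ) * B) * (M : ℂ))
        = (M : ℂ) * eZ M ((i0 : ℤ) * B) * eZ a ((B : ℤ) * j) := by
      intro j _
      have e2 : (((j * dt + i0 : ℕ) : ℤ) * B) = ((i0 : ℤ) * B) + ((dt : ℤ) * ((B : ℤ) * j)) := by
        push_cast; ring
      rw [e2, eZ_add]
      have e3 : eZ M ((dt : ℤ) * ((B : ℤ) * j)) = eZ a ((B : ℤ) * j) := by
        rw [hMdef, show a * dt = dt * a from mul_comm a dt]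
        exact eZ_p_mul dt a hdt.ne' _
      rw [e3]; ring
    rw [Finset.sum_congr rfl split2]
    rw [← Finset.mul_sum, sum_range_eZ a ha.ne' B]
    by_cases hB : a ∣ B
    · obtain ⟨t, ht⟩ := hB
      rw [if_pos (Int.natCast_dvd_natCast.mpr ⟨t, ht⟩)]
      rw [if_pos ⟨⟨w, hw⟩, ⟨t, ht⟩⟩]
      have hAdiv : (A : ℤ) / a = w := by
        rw [hw]; push_cast; exact Int.mul_ediv_cancel_left _ (by exact_mod_cast ha.ne')
      have hBdiv : (B : ℤ) / a = t := by
        rw [ht]; push_cast; exact Int.mul_ediv_cancel_left _ (by exact_mod_cast ha.ne')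
      rw [hAdiv, hBdiv]
      have efin : eZ M ((i0 : ℤ) * B) = eZ M (-((a : ℤ) * bt * w * t)) := by
        refine eZ_congr M hM ?_
        obtain ⟨k, hk⟩ := hi0dvd
        refine ⟨(t : ℤ) * k, ?_⟩
        rw [hMZ]
        push_cast [ht]
        linear_combination (a : ℤ) * (t : ℤ) * hk
      rw [efin]
      have hMC : (M : ℂ) = (a : ℂ) * (dt : ℂ) := by rw [hMdef]; push_cast; ring
      rw [hMC]
      push_cast
      ring
    · rw [if_neg (by
        intro h
        exact hB (by exact_mod_cast h)), if_neg (fun h => hB h.2)]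
      ring
  · rw [if_neg (fun h => hA h.1)]
    refine Finset.sum_eq_zero fun x _ => ?_
    rw [if_neg, mul_zero]
    rintro ⟨k, hk⟩
    apply hA
    have : (a : ℤ) ∣ (A : ℤ) := ⟨b' * x.val + dt * k, by
      rw [hMZ] at hk; linear_combination hk⟩
    exact_mod_cast this

/-- The flux (Gauss) sum identity on `L/NL`, `L = H^{⊕11}`, `N = a·p·dt = a·d`, `d = p·dt`,
`b'·bt ≡ -1 (mod dt)`:
`Σ_u ζ_N^{u·v} δ_{adtu,0} ζ_{adt}^{-(ab'/2)(u/p)²} = δ_{dv,0} ζ_{adt}^{-(abt/2)(v/a)²} (a²dt)^{11}`. -/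
theorem flux_sum_identity (a p dt : ℕ) (ha : 0 < a) (hp : 0 < p) (hdt : 0 < dt)
    (N d : ℕ) [NeZero N] (hN : N = a * p * dt) (hd : d = p * dt)
    (b' bt : ℤ) (hbb : b' * bt ≡ -1 [ZMOD (dt : ℤ)])
    (v : Fin (2 * 11) → ZMod N) :
    ∑ u : Fin (2 * 11) → ZMod N,
      eZ N (hypB 11 (zlift u) (zlift v)) *
        (if ∀ i, ((a * dt : ℕ) : ZMod N) * u i = 0
          then eZ (a * dt) (-((a : ℤ) * b' * (hypB 11 (zdiv u p) (zdiv u p) / 2)))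
          else 0)
      =
    (if ∀ i, ((d : ℕ) : ZMod N) * v i = 0
      then eZ (a * dt) (-((a : ℤ) * bt * (hypB 11 (zdiv v a) (zdiv v a) / 2))) *
        (((a ^ 2 * dt : ℕ) : ℂ)) ^ (11 : ℕ)
      else 0) := by
  have hMne : a * dt ≠ 0 := by positivity
  haveI : NeZero (a * dt) := ⟨hMne⟩
  have hNM : N = p * (a * dt) := by rw [hN]; ring
  have hNd : N = d * a := by rw [hN, hd]; ring
  have hdne : d ≠ 0 := by rw [hd]; positivity
  have hp' : (p : ℤ) ≠ 0 := by exact_mod_cast hp.ne'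
  have hbb' : (dt : ℤ) ∣ (b' * bt + 1) := by
    obtain ⟨k, hk⟩ := Int.ModEq.dvd hbb
    exact ⟨-k, by linarith⟩
  have embval : ∀ (g : Fin (2 * 11) → ZMod (a * dt)) (i : Fin (2 * 11)),
      (((p * (g i).val : ℕ) : ZMod N)).val = p * (g i).val := by
    intro g i
    apply ZMod.val_cast_of_lt
    rw [hNM]
    exact (mul_lt_mul_iff_right₀ hp).mpr (ZMod.val_lt (g i))
  have toval : ∀ w : ZMod N, ((w.val : ℕ) : ZMod N) = w := by
    intro w; rw [ZMod.natCast_val, ZMod.cast_id]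
  have tovalM : ∀ w : ZMod (a * dt), ((w.val : ℕ) : ZMod (a * dt)) = w := by
    intro w; rw [ZMod.natCast_val, ZMod.cast_id]
  have condchar : ∀ (c : ℕ) (w : ZMod N), ((c : ZMod N) * w = 0 ↔ N ∣ c * w.val) := by
    intro c w
    conv_lhs => rw [← toval w, ← Nat.cast_mul]
    exact ZMod.natCast_eq_zero_iff _ _
  have dvdiffL : ∀ m : ℕ, (N ∣ (a * dt) * m ↔ p ∣ m) := by
    intro m
    rw [hNM, mul_comm p (a * dt)]
    exact Nat.mul_dvd_mul_iff_left (Nat.pos_of_ne_zero hMne)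
  have dvdiffR : ∀ m : ℕ, (N ∣ d * m ↔ a ∣ m) := by
    intro m
    rw [hNd]
    exact Nat.mul_dvd_mul_iff_left (Nat.pos_of_ne_zero hdne)
  have condL : ∀ u : Fin (2 * 11) → ZMod N,
      ((∀ i, ((a * dt : ℕ) : ZMod N) * u i = 0) ↔ ∀ i, p ∣ (u i).val) := by
    intro u
    refine forall_congr' fun i => ?_
    rw [condchar]
    exact dvdiffL _
  have condR : (∀ i, ((d : ℕ) : ZMod N) * v i = 0) ↔ ∀ j, a ∣ (v j).val := by
    refine forall_congr' fun i => ?_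
    rw [condchar]
    exact dvdiffR _
  have ecast : ∀ X : ℤ, eZ N ((p : ℤ) * X) = eZ (a * dt) X := by
    intro X
    rw [hNM]
    exact eZ_p_mul p (a * dt) hp.ne' X
  -- Step 1: merge the if into the summand and restrict to the filtered set
  simp only [mul_ite, mul_zero]
  rw [← Finset.sum_filter]
  -- Step 2: reindex by the embedding of `(Z/(a·dt))^22` into `(Z/N)^22`
  trans (∑ g : Fin (2 * 11) → ZMod (a * dt),
    eZ N (hypB 11 (zlift (fun i => ((p * (g i).val : ℕ) : ZMod N))) (zlift v)) *
      eZ (a * dt) (-((a : ℤ) * b' *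
        (hypB 11 (zdiv (fun i => ((p * (g i).val : ℕ) : ZMod N)) p)
          (zdiv (fun i => ((p * (g i).val : ℕ) : ZMod N)) p) / 2))))
  · refine (Finset.sum_nbij'
      (fun (g : Fin (2 * 11) → ZMod (a * dt)) => (fun i => ((p * (g i).val : ℕ) : ZMod N)))
      (fun (u : Fin (2 * 11) → ZMod N) => (fun i => (((u i).val / p : ℕ) : ZMod (a * dt))))
      ?_ ?_ ?_ ?_ ?_).symm
    · intro g _
      refine Finset.mem_filter.2 ⟨Finset.mem_univ _, (condL _).2 fun i => ?_⟩
      rw [embval g i]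
      exact dvd_mul_right p _
    · intro u _
      exact Finset.mem_univ _
    · intro g _
      funext i
      simp only []
      rw [embval g i, Nat.mul_div_cancel_left _ hp, tovalM]
    · intro u hu
      have hpd := (condL u).1 (Finset.mem_filter.1 hu).2
      funext i
      simp only []
      have h1 : (u i).val < p * (a * dt) := lt_of_lt_of_eq (ZMod.val_lt (u i)) (by rw [hNM])
      have hlt : (u i).val / p < a * dt := Nat.div_lt_of_lt_mul h1
      rw [ZMod.val_cast_of_lt hlt, Nat.mul_div_cancel' (hpd i), toval]
    · intro g _
      rfl
  -- Step 3: pointwise simplification of the summand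
  rw [Finset.sum_congr rfl (fun (g : Fin (2 * 11) → ZMod (a * dt)) _ => show (eZ N (hypB 11 (zlift (fun i => ((p * (g i).val : ℕ) : ZMod N))) (zlift v)) *
      eZ (a * dt) (-((a : ℤ) * b' *
        (hypB 11 (zdiv (fun i => ((p * (g i).val : ℕ) : ZMod N)) p)
          (zdiv (fun i => ((p * (g i).val : ℕ) : ZMod N)) p) / 2)))) = ∏ i : Fin 11,
      eZ (a * dt)
        (((g ⟨2 * i.val, by have := i.isLt; omega⟩).val : ℤ) *
            ((v ⟨2 * i.val + 1, by have := i.isLt; omega⟩).val : ℤ) +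
          ((g ⟨2 * i.val + 1, by have := i.isLt; omega⟩).val : ℤ) *
            ((v ⟨2 * i.val, by have := i.isLt; omega⟩).val : ℤ) -
          (a : ℤ) * b' * ((g ⟨2 * i.val, by have := i.isLt; omega⟩).val : ℤ) *
            ((g ⟨2 * i.val + 1, by have := i.isLt; omega⟩).val : ℤ)) from by
    have hzl : zlift (fun i => ((p * (g i).val : ℕ) : ZMod N))
        = fun i => (p : ℤ) * ((g i).val : ℤ) := by
      funext i; simp only [zlift]; rw [embval g i]; push_cast; ring
    have hzd : zdiv (fun i => ((p * (g i).val : ℕ) : ZMod N)) p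
        = fun i => ((g i).val : ℤ) := by
      funext i
      simp only [zdiv]
      rw [embval g i]
      push_cast
      exact Int.mul_ediv_cancel_left _ hp'
    rw [hzl, hzd]
    rw [show hypB 11 (fun i => (p : ℤ) * ((g i).val : ℤ)) (zlift v)
        = (p : ℤ) * hypB 11 (fun i => ((g i).val : ℤ)) (zlift v) from hypB_mul_left 11 _ _ _]
    rw [ecast]
    rw [hypB_self_div_two 11 (fun i => ((g i).val : ℤ))]
    rw [← eZ_add, ← eZ_sum]
    congr 1
    simp only [hypB, zlift]
    rw [Finset.mul_sum, ← Finset.sum_neg_distrib, ← Finset.sum_add_distrib]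
    exact Finset.sum_congr rfl fun i _ => by ring)]
  -- Step 4: reindex by the pairing equivalence and factor the sum into 11 pair sums
  rw [← Equiv.sum_comp (pairEquiv 11 (ZMod (a * dt)))]
  simp only [pairEquiv_fst, pairEquiv_snd]
  trans (∏ i : Fin 11, ∑ z : ZMod (a * dt) × ZMod (a * dt),
    eZ (a * dt)
      ((z.1.val : ℤ) * ((v ⟨2 * i.val + 1, by have := i.isLt; omega⟩).val : ℤ) +
        (z.2.val : ℤ) * ((v ⟨2 * i.val, by have := i.isLt; omega⟩).val : ℤ) -
        (a : ℤ) * b' * (z.1.val : ℤ) * (z.2.val : ℤ)))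
  · exact (Fintype.prod_sum (fun (i : Fin 11) (z : ZMod (a * dt) × ZMod (a * dt)) =>
      eZ (a * dt)
        ((z.1.val : ℤ) * ((v ⟨2 * i.val + 1, by have := i.isLt; omega⟩).val : ℤ) +
          (z.2.val : ℤ) * ((v ⟨2 * i.val, by have := i.isLt; omega⟩).val : ℤ) -
          (a : ℤ) * b' * (z.1.val : ℤ) * (z.2.val : ℤ)))).symm
  -- Step 5: evaluate each pair sum
  rw [Finset.prod_congr rfl (fun (i : Fin 11) _ => show (∑ z : ZMod (a * dt) × ZMod (a * dt),
      eZ (a * dt)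
        ((z.1.val : ℤ) * ((v ⟨2 * i.val + 1, by have := i.isLt; omega⟩).val : ℤ) +
          (z.2.val : ℤ) * ((v ⟨2 * i.val, by have := i.isLt; omega⟩).val : ℤ) -
          (a : ℤ) * b' * (z.1.val : ℤ) * (z.2.val : ℤ))) =
      (if a ∣ (v ⟨2 * i.val, by have := i.isLt; omega⟩).val ∧
          a ∣ (v ⟨2 * i.val + 1, by have := i.isLt; omega⟩).val
        then ((a ^ 2 * dt : ℕ) : ℂ) *
          eZ (a * dt) (-((a : ℤ) * bt *
            (((v ⟨2 * i.val, by have := i.isLt; omega⟩).val : ℤ) / a) *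
            (((v ⟨2 * i.val + 1, by have := i.isLt; omega⟩).val : ℤ) / a)))
        else 0) from by
    rw [Fintype.sum_prod_type]
    exact pair_sum a dt (a * dt) ha hdt b' bt hbb' rfl _ _)]
  -- Step 6: assemble
  by_cases hall : ∀ i : Fin 11, a ∣ (v ⟨2 * i.val, by have := i.isLt; omega⟩).val ∧
      a ∣ (v ⟨2 * i.val + 1, by have := i.isLt; omega⟩).val
  · rw [Finset.prod_congr rfl fun i _ => if_pos (hall i),
      if_pos (condR.2 ((fin_pair_forall 11 fun j => a ∣ (v j).val).2 hall))]
    rw [Finset.prod_mul_distrib, Finset.prod_const, Finset.card_univ, Fintype.card_fin,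
      ← eZ_sum]
    rw [hypB_self_div_two 11 (zdiv v a)]
    simp only [zdiv]
    rw [mul_comm]
    congr 1
    rw [Finset.mul_sum, ← Finset.sum_neg_distrib]
    congr 1
    exact Finset.sum_congr rfl fun i _ => by ring
  · obtain ⟨i₀, hi₀⟩ := not_forall.1 hall
    rw [if_neg (fun hc => hall ((fin_pair_forall 11 fun j => a ∣ (v j).val).1 (condR.1 hc)))]
    exact Finset.prod_eq_zero (Finset.mem_univ i₀) (if_neg hi₀)
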